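/- arXiv:2101.09806 — 6 statements merged into one kernel-verified Lean document; each statement's English description precedes it below -/
import Mathlib

section
/- Let q ≥ 2 and a_2, …, a_q be integers with a_i ≥ 1 for 2 ≤ i ≤ q and a_q ≥ 2. Fix r ≥ 1, set k = 1 + r·q and c = 2 + (r-1)·q. Let G : ℕ → ℤ satisfy G_1 = 1, G_i = 0 for 2 ≤ i ≤ k, and for n > k, G_n = G_{n-k} - ∑_{i=2}^{q} a_i · G_{n-k+i-1} - ∑_{j=q}^{k-1} G_{n-k+j}. Then G_{k+1} = 1, G_{k+2} = -1, and G_{k+u} = 0 for all u with 3 ≤ u ≤ c. -/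
theorem stmt_5 (q r : ℕ) (hq : 2 ≤ q) (hr : 1 ≤ r) (a : ℕ → ℤ)
    (ha : ∀ i, 2 ≤ i → i ≤ q → 1 ≤ a i) (haq : 2 ≤ a q)
    (k c : ℕ) (hk : k = 1 + r * q) (hc : c = 2 + (r - 1) * q)
    (G : ℕ → ℤ) (h1 : G 1 = 1) (h0 : ∀ i, 2 ≤ i → i ≤ k → G i = 0)
    (hrec : ∀ n, k < n →
      G n = G (n - k) - (∑ i ∈ Finset.Icc 2 q, a i * G (n - k + i - 1))
            - ∑ j ∈ Finset.Icc q (k-1), G (n - k + j)) :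
    G (k+1) = 1 ∧ G (k+2) = -1 ∧ ∀ u, 3 ≤ u → u ≤ c → G (k+u) = 0 := by
  obtain ⟨m, rfl⟩ : ∃ m, r = m + 1 := ⟨r - 1, by omega⟩
  have hk' : k = 1 + m * q + q := by rw [hk]; ring
  have hc' : c = 2 + m * q := by rw [hc]; simp
  obtain ⟨t, ht⟩ : ∃ t, m * q = t := ⟨_, rfl⟩
  rw [ht] at hk' hc'
  clear hk hc ht
  have key : ∀ u, 1 ≤ u → u ≤ c → G (k+u) = if u = 1 then 1 else if u = 2 then -1 else 0 := by
    intro u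
    induction u using Nat.strong_induction_on with
    | _ u IH =>
      intro hu1 hu2
      have hn := hrec (k+u) (by omega)
      rw [Nat.add_sub_cancel_left] at hn
      have hGu : G u = if u = 1 then 1 else 0 := by
        by_cases h : u = 1
        · simp [h, h1]
        · rw [if_neg h]; exact h0 u (by omega) (by omega)
      have hsum1 : ∑ i ∈ Finset.Icc 2 q, a i * G (u + i - 1) = 0 := by
        apply Finset.sum_eq_zero
        intro i hi
        simp only [Finset.mem_Icc] at hi
        rw [h0 (u + i - 1) (by omega) (by omega), mul_zero]
      have hsum2 : ∑ j ∈ Finset.Icc q (k-1), G (u + j)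
          = ∑ j ∈ Finset.Icc q (k-1),
              ((if j = k + 1 - u then (1:ℤ) else 0) + (if j = k + 2 - u then (-1:ℤ) else 0)) := by
        apply Finset.sum_congr rfl
        intro j hj
        simp only [Finset.mem_Icc] at hj
        by_cases hle : u + j ≤ k
        · rw [h0 (u + j) (by omega) hle, if_neg (by omega), if_neg (by omega)]
          ring
        · set v := u + j - k with hv
          have hv2 : v < u := by omega
          have hIH := IH v hv2 (by omega) (by omega)
          have hj' : u + j = k + v := by omega
          rw [hj', hIH]
          by_cases e1 : v = 1
          · rw [if_pos e1, if_pos (by omega), if_neg (by omega)]; ring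
          · by_cases e2 : v = 2
            · rw [if_neg e1, if_pos e2, if_neg (by omega), if_pos (by omega)]; ring
            · rw [if_neg e1, if_neg e2, if_neg (by omega), if_neg (by omega)]; ring
      rw [hsum2, Finset.sum_add_distrib, Finset.sum_ite_eq' (Finset.Icc q (k-1)),
          Finset.sum_ite_eq' (Finset.Icc q (k-1)), hsum1, hGu] at hn
      simp only [Finset.mem_Icc] at hn
      by_cases e1 : u = 1
      · subst e1
        rw [if_pos rfl, if_neg (by omega), if_neg (by omega)] at hn
        rw [if_pos rfl]
        linarith
      · by_cases e2 : u = 2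
        · subst e2
          rw [if_neg e1, if_pos (by omega), if_neg (by omega)] at hn
          rw [if_neg e1, if_pos rfl]
          linarith
        · rw [if_neg e1, if_pos (by omega), if_pos (by omega)] at hn
          rw [if_neg e1, if_neg e2]
          linarith
  refine ⟨?_, ?_, ?_⟩
  · simpa using key 1 (by omega) (by omega)
  · simpa using key 2 (by omega) (by omega)
  · intro u h3 huc
    have := key u (by omega) huc
    rw [if_neg (by omega), if_neg (by omega)] at this
    exact this
end

section
/- Let q ≥ 2, a_2, …, a_q integers, r ≥ 2, k = 1 + rq, c = 2 + (r-1)q. If G : ℤ → ℤ satisfies for all n the recursion G_n = G_{n-k} - ∑_{i=2}^{q} a_i G_{n-k+i-1} - ∑_{j=q}^{k-1} G_{n-k+j}, then G also satisfies for all n: G_n = -(a_q - 1) G_{n-c} + ∑_{e=2}^{q-1} (a_{e+1} - a_e) G_{n-(k+1-e)} + (1 + a_2) G_{n-k} - G_{n-(k+1)}. -/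
theorem stmt_6 (q r : ℕ) (hq : 2 ≤ q) (hr : 2 ≤ r) (a : ℕ → ℤ)
    (k c : ℕ) (hk : k = 1 + r * q) (hc : c = 2 + (r - 1) * q)
    (G : ℤ → ℤ)
    (hrec : ∀ n : ℤ,
      G n = G (n - k) - (∑ i ∈ Finset.Icc 2 q, a i * G (n - k + i - 1))
            - ∑ j ∈ Finset.Icc q (k-1), G (n - k + j)) :
    ∀ n : ℤ,
      G n = -(a q - 1) * G (n - c)
            + (∑ e ∈ Finset.Icc 2 (q-1), (a (e+1) - a e) * G (n - (k + 1 - (e:ℤ))))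
            + (1 + a 2) * G (n - k) - G (n - (k+1)) := by
  intro n
  have hqk : q + 3 ≤ k := by
    have : 2 * q ≤ r * q := Nat.mul_le_mul_right q hr
    omega
  have hcz : (c:ℤ) = (k:ℤ) + 1 - (q:ℤ) := by
    have h1 : ((r - 1 : ℕ) : ℤ) = (r:ℤ) - 1 := by
      have : 1 ≤ r := by omega
      push_cast [this]; ring
    subst hk hc; push_cast [h1]; ring
  have h1 := hrec n
  have h2 := hrec (n - 1)
  -- reindex the long sum at n-1
  have hB' : ∑ j ∈ Finset.Icc q (k-1), G (n - 1 - k + j)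
      = ∑ j ∈ Finset.Icc (q-1) (k-2), G (n - k + j) := by
    rw [show Finset.Icc q (k-1) = Finset.map (addRightEmbedding 1) (Finset.Icc (q-1) (k-2)) by
      rw [Finset.map_add_right_Icc]; congr 1 <;> omega, Finset.sum_map]
    refine Finset.sum_congr rfl fun j hj => ?_
    simp only [addRightEmbedding_apply]
    congr 1; push_cast; ring
  -- reindex the weighted sum at n-1
  have hA' : ∑ i ∈ Finset.Icc 2 q, a i * G (n - 1 - k + i - 1)
      = a 2 * G (n - k) + ∑ e ∈ Finset.Icc 2 (q-1), a (e+1) * G (n - k + e - 1) := by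
    rw [show Finset.Icc 2 q = Finset.map (addRightEmbedding 1) (Finset.Icc 1 (q-1)) by
      rw [Finset.map_add_right_Icc]; congr 1; omega, Finset.sum_map]
    rw [show Finset.Icc 1 (q-1) = insert 1 (Finset.Icc 2 (q-1)) by
      ext x; simp [Finset.mem_Icc, Finset.mem_insert]; omega,
      Finset.sum_insert (by simp [Finset.mem_Icc])]
    simp only [addRightEmbedding_apply]
    congr 1
    · push_cast; ring_nf
    · refine Finset.sum_congr rfl fun e he => ?_
      congr 2; push_cast; ring
  -- split the top term of the weighted sum at n
  have hA : ∑ i ∈ Finset.Icc 2 q, a i * G (n - k + i - 1)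
      = (∑ e ∈ Finset.Icc 2 (q-1), a e * G (n - k + e - 1)) + a q * G (n - c) := by
    rw [show Finset.Icc 2 q = insert q (Finset.Icc 2 (q-1)) by
      ext x; simp [Finset.mem_Icc, Finset.mem_insert]; omega,
      Finset.sum_insert (by simp [Finset.mem_Icc]; omega)]
    rw [add_comm]
    congr 2
    rw [hcz]; ring
  -- split the endpoints of the long sums
  have hB : ∑ j ∈ Finset.Icc q (k-1), G (n - k + j)
      = (∑ j ∈ Finset.Icc q (k-2), G (n - k + j)) + G (n - 1) := by
    rw [show Finset.Icc q (k-1) = insert (k-1) (Finset.Icc q (k-2)) by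
      ext x; simp [Finset.mem_Icc, Finset.mem_insert]; omega,
      Finset.sum_insert (by simp [Finset.mem_Icc]; omega)]
    rw [add_comm]
    congr 2
    have : ((k - 1 : ℕ) : ℤ) = (k:ℤ) - 1 := by
      have : 1 ≤ k := by omega
      push_cast [this]; ring
    rw [this]; ring
  have hB'' : ∑ j ∈ Finset.Icc (q-1) (k-2), G (n - k + j)
      = G (n - c) + ∑ j ∈ Finset.Icc q (k-2), G (n - k + j) := by
    rw [show Finset.Icc (q-1) (k-2) = insert (q-1) (Finset.Icc q (k-2)) by
      ext x; simp [Finset.mem_Icc, Finset.mem_insert]; omega,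
      Finset.sum_insert (by simp [Finset.mem_Icc]; omega)]
    congr 2
    have : ((q - 1 : ℕ) : ℤ) = (q:ℤ) - 1 := by
      have : 1 ≤ q := by omega
      push_cast [this]; ring
    rw [this, hcz]; ring
  -- rewrite the target sum
  have hT : ∑ e ∈ Finset.Icc 2 (q-1), (a (e+1) - a e) * G (n - (k + 1 - (e:ℤ)))
      = (∑ e ∈ Finset.Icc 2 (q-1), a (e+1) * G (n - k + e - 1))
        - ∑ e ∈ Finset.Icc 2 (q-1), a e * G (n - k + e - 1) := by
    rw [← Finset.sum_sub_distrib]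
    refine Finset.sum_congr rfl fun e he => ?_
    have : n - ((k:ℤ) + 1 - (e:ℤ)) = n - k + e - 1 := by ring
    rw [this]; ring
  rw [hA, hB] at h1
  rw [hA', hB', hB''] at h2
  have hk1 : n - 1 - (k:ℤ) = n - ((k:ℤ) + 1) := by ring
  rw [hk1] at h2
  rw [hT]
  -- done
  linarith [h1, h2]
end

section
/- Main theorem, parts (iii)-(iv): Let q ≥ 2, integers a_i ≥ 1 for 2 ≤ i ≤ q with a_q ≥ 2, r ≥ 1, k = 1 + rq, c = 2 + (r-1)q. Let G : ℕ → ℤ satisfy G_1 = 1, G_i = 0 for 2 ≤ i ≤ k, and G_n = G_{n-k} - ∑_{i=2}^{q} a_i G_{n-k+i-1} - ∑_{j=q}^{k-1} G_{n-k+j} for n > k. Define R_{t,s} = G_{k + (t-1)c + s} for 1 ≤ t ≤ r, 1 ≤ s ≤ c, and l(t) = 2 + (t-1)q. Then for all 1 ≤ t ≤ r: R_{t,1} ≠ 0, R_{t,l(t)} ≠ 0, and R_{t,u} = 0 for all l(t) < u ≤ c. -/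
theorem stmt_9 (q r : ℕ) (hq : 2 ≤ q) (hr : 1 ≤ r) (a : ℕ → ℤ)
    (ha : ∀ i, 2 ≤ i → i ≤ q → 1 ≤ a i) (haq : 2 ≤ a q)
    (k c : ℕ) (hk : k = 1 + r * q) (hc : c = 2 + (r - 1) * q)
    (G : ℕ → ℤ) (h1 : G 1 = 1) (h0 : ∀ i, 2 ≤ i → i ≤ k → G i = 0)
    (hrec : ∀ n, k < n →
      G n = G (n - k) - (∑ i ∈ Finset.Icc 2 q, a i * G (n - k + i - 1))
            - ∑ j ∈ Finset.Icc q (k-1), G (n - k + j))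
    (R : ℕ → ℕ → ℤ) (hR : ∀ t s, R t s = G (k + (t - 1) * c + s))
    (l : ℕ → ℕ) (hl : ∀ t, l t = 2 + (t - 1) * q) :
    ∀ t, 1 ≤ t → t ≤ r →
      R t 1 ≠ 0 ∧ R t (l t) ≠ 0 ∧ ∀ u, l t < u → u ≤ c → R t u = 0 := by
  obtain ⟨r', rfl⟩ : ∃ r', r = r' + 1 := ⟨r - 1, by omega⟩
  have hk' : k = 1 + r' * q + q := by rw [hk]; ring
  have hc' : c = 2 + r' * q := by rw [hc, show r' + 1 - 1 = r' by omega]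
  have hkq : c + q = k + 1 := by omega
  have hc2 : 2 ≤ c := by omega
  have hk3 : 3 ≤ k := by omega
  have hIcc : ∀ (f : ℕ → ℤ) (a b : ℕ),
      ∑ i ∈ Finset.Icc a b, f i = ∑ i ∈ Finset.range (b + 1 - a), f (a + i) := by
    intro f a b
    rw [← Finset.Ico_add_one_right_eq_Icc, Finset.sum_Ico_eq_sum_range]
  -- the telescoped ("reduced") recurrence
  have key : ∀ m : ℕ, 1 ≤ m →
      G (k + m + 1) = (1 + a 2) * G (m + 1) - G m - (a q - 1) * G (m + q)
        - ∑ i ∈ Finset.Icc 2 (q - 1), (a i - a (i + 1)) * G (m + i) := by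
    intro m hm
    have e1 := hrec (k + m + 1) (by omega)
    rw [show k + m + 1 - k = m + 1 by omega] at e1
    have e2 := hrec (k + m) (by omega)
    rw [show k + m - k = m by omega] at e2
    have hA1 : ∑ i ∈ Finset.Icc 2 q, a i * G (m + 1 + i - 1)
        = ∑ i ∈ Finset.range (q - 1), a (2 + i) * G (m + 2 + i) := by
      rw [hIcc, show q + 1 - 2 = q - 1 by omega]
      exact Finset.sum_congr rfl fun i _ => by rw [show m + 1 + (2 + i) - 1 = m + 2 + i by omega]
    have hS1 : ∑ j ∈ Finset.Icc q (k - 1), G (m + 1 + j)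
        = ∑ j ∈ Finset.range (k - q), G (m + q + (j + 1)) := by
      rw [hIcc, show k - 1 + 1 - q = k - q by omega]
      exact Finset.sum_congr rfl fun j _ => by rw [show m + 1 + (q + j) = m + q + (j + 1) by omega]
    have hA0 : ∑ i ∈ Finset.Icc 2 q, a i * G (m + i - 1)
        = ∑ i ∈ Finset.range (q - 1), a (2 + i) * G (m + 1 + i) := by
      rw [hIcc, show q + 1 - 2 = q - 1 by omega]
      exact Finset.sum_congr rfl fun i _ => by rw [show m + (2 + i) - 1 = m + 1 + i by omega]
    have hS0 : ∑ j ∈ Finset.Icc q (k - 1), G (m + j)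
        = ∑ j ∈ Finset.range (k - q), G (m + q + j) := by
      rw [hIcc, show k - 1 + 1 - q = k - q by omega]
      exact Finset.sum_congr rfl fun j _ => by rw [show m + (q + j) = m + q + j by omega]
    rw [hA1, hS1] at e1
    rw [hA0, hS0] at e2
    have p1 : ∑ j ∈ Finset.range (k - q + 1), G (m + q + j)
        = (∑ j ∈ Finset.range (k - q), G (m + q + j)) + G (m + q + (k - q)) :=
      Finset.sum_range_succ _ _
    have p2 : ∑ j ∈ Finset.range (k - q + 1), G (m + q + j)
        = (∑ j ∈ Finset.range (k - q), G (m + q + (j + 1))) + G (m + q + 0) :=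
      Finset.sum_range_succ' _ _
    rw [show m + q + (k - q) = k + m by omega] at p1
    rw [show m + q + 0 = m + q by omega] at p2
    have e3 : ∑ j ∈ Finset.range (k - q), G (m + q + (j + 1))
        = (∑ j ∈ Finset.range (k - q), G (m + q + j)) + G (k + m) - G (m + q) := by
      linarith [p1, p2]
    have q1 : ∑ i ∈ Finset.range (q - 2 + 1), a (2 + i) * G (m + 2 + i)
        = (∑ i ∈ Finset.range (q - 2), a (2 + i) * G (m + 2 + i))
          + a (2 + (q - 2)) * G (m + 2 + (q - 2)) := Finset.sum_range_succ _ _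
    have q2 : ∑ i ∈ Finset.range (q - 2 + 1), a (2 + i) * G (m + 1 + i)
        = (∑ i ∈ Finset.range (q - 2), a (2 + (i + 1)) * G (m + 1 + (i + 1)))
          + a (2 + 0) * G (m + 1 + 0) := Finset.sum_range_succ' _ _
    rw [show q - 2 + 1 = q - 1 by omega, show 2 + (q - 2) = q by omega,
        show m + 2 + (q - 2) = m + q by omega] at q1
    rw [show q - 2 + 1 = q - 1 by omega, show (2 : ℕ) + 0 = 2 by omega,
        show m + 1 + 0 = m + 1 by omega] at q2
    have q2' : ∑ i ∈ Finset.range (q - 2), a (2 + (i + 1)) * G (m + 1 + (i + 1))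
        = ∑ i ∈ Finset.range (q - 2), a (3 + i) * G (m + 2 + i) :=
      Finset.sum_congr rfl fun i _ => by
        rw [show 2 + (i + 1) = 3 + i by omega, show m + 1 + (i + 1) = m + 2 + i by omega]
    rw [q2'] at q2
    have q3 : ∑ i ∈ Finset.range (q - 2), (a (2 + i) - a (3 + i)) * G (m + 2 + i)
        = (∑ i ∈ Finset.range (q - 2), a (2 + i) * G (m + 2 + i))
          - ∑ i ∈ Finset.range (q - 2), a (3 + i) * G (m + 2 + i) := by
      rw [← Finset.sum_sub_distrib]
      exact Finset.sum_congr rfl fun i _ => by ring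
    have e5 : ∑ i ∈ Finset.Icc 2 (q - 1), (a i - a (i + 1)) * G (m + i)
        = ∑ i ∈ Finset.range (q - 2), (a (2 + i) - a (3 + i)) * G (m + 2 + i) := by
      rw [hIcc, show q - 1 + 1 - 2 = q - 2 by omega]
      exact Finset.sum_congr rfl fun i _ => by
        rw [show 2 + i + 1 = 3 + i by omega, show m + (2 + i) = m + 2 + i by omega]
    rw [e5]
    have e4 : ∑ i ∈ Finset.range (q - 1), a (2 + i) * G (m + 2 + i)
        = (∑ i ∈ Finset.range (q - 1), a (2 + i) * G (m + 1 + i)) + a q * G (m + q)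
          - a 2 * G (m + 1)
          + ∑ i ∈ Finset.range (q - 2), (a (2 + i) - a (3 + i)) * G (m + 2 + i) := by
      rw [q3]; linarith [q1, q2]
    linear_combination e1 - e4 - e3 - e2
  -- Row 1 values
  have hGk1 : G (k + 1) = 1 := by
    have e := hrec (k + 1) (by omega)
    rw [show k + 1 - k = 1 by omega] at e
    have z1 : ∑ i ∈ Finset.Icc 2 q, a i * G (1 + i - 1) = 0 :=
      Finset.sum_eq_zero fun i hi => by
        rw [Finset.mem_Icc] at hi
        rw [h0 (1 + i - 1) (by omega) (by omega), mul_zero]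
    have z2 : ∑ j ∈ Finset.Icc q (k - 1), G (1 + j) = 0 :=
      Finset.sum_eq_zero fun j hj => by
        rw [Finset.mem_Icc] at hj
        exact h0 (1 + j) (by omega) (by omega)
    rw [z1, z2, h1] at e
    simpa using e
  have hGk2 : G (k + 2) = -1 := by
    have e := hrec (k + 2) (by omega)
    rw [show k + 2 - k = 2 by omega] at e
    have z1 : ∑ i ∈ Finset.Icc 2 q, a i * G (2 + i - 1) = 0 :=
      Finset.sum_eq_zero fun i hi => by
        rw [Finset.mem_Icc] at hi
        rw [h0 (2 + i - 1) (by omega) (by omega), mul_zero]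
    have z2 : ∑ j ∈ Finset.Icc q (k - 1), G (2 + j) = G (2 + (k - 1)) :=
      Finset.sum_eq_single _
        (fun x hx hne => by
          rw [Finset.mem_Icc] at hx
          exact h0 (2 + x) (by omega) (by omega))
        (fun hb => absurd (Finset.mem_Icc.2 ⟨by omega, le_refl _⟩) hb)
    rw [z1, z2, show 2 + (k - 1) = k + 1 by omega, hGk1, h0 2 (by omega) (by omega)] at e
    linarith [e]
  have baseC : ∀ u, 3 ≤ u → u ≤ c → G (k + u) = 0 := by
    intro u
    induction u using Nat.strong_induction_on with
    | _ u ih =>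
      intro hu3 huc
      have e := hrec (k + u) (by omega)
      rw [show k + u - k = u by omega] at e
      have z1 : ∑ i ∈ Finset.Icc 2 q, a i * G (u + i - 1) = 0 :=
        Finset.sum_eq_zero fun i hi => by
          rw [Finset.mem_Icc] at hi
          rw [h0 (u + i - 1) (by omega) (by omega), mul_zero]
      have z2 : ∑ j ∈ Finset.Icc q (k - 1), G (u + j) = G (u + (k + 1 - u)) + G (u + (k + 2 - u)) :=
        Finset.sum_eq_add_of_mem (k + 1 - u) (k + 2 - u)
          (Finset.mem_Icc.2 ⟨by omega, by omega⟩)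
          (Finset.mem_Icc.2 ⟨by omega, by omega⟩)
          (by omega)
          (fun x hx hne => by
            rw [Finset.mem_Icc] at hx
            by_cases hxk : u + x ≤ k
            · exact h0 (u + x) (by omega) hxk
            · rw [show u + x = k + (u + x - k) by omega]
              exact ih (u + x - k) (by omega) (by omega) (by omega))
      rw [z1, z2, show u + (k + 1 - u) = k + 1 by omega, show u + (k + 2 - u) = k + 2 by omega,
        hGk1, hGk2, h0 u (by omega) (by omega)] at e
      linarith [e]
  -- main induction over rows
  have main : ∀ t, 1 ≤ t → t ≤ r' + 1 →
      G (k + (t - 1) * c + 1) = (1 - a q) ^ (t - 1) ∧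
      G (k + (t - 1) * c + (2 + (t - 1) * q)) = (-1 : ℤ) ^ t ∧
      ∀ u, 2 + (t - 1) * q < u → u ≤ c → G (k + (t - 1) * c + u) = 0 := by
    intro t
    induction t using Nat.strong_induction_on with
    | _ t ih =>
      intro ht1 htr
      rcases t with _ | t
      · omega
      rcases t with _ | t0
      · -- t = 1
        rw [show 0 + 1 - 1 = 0 by omega]
        rw [Nat.zero_mul]
        refine ⟨by simpa using hGk1, ?_, ?_⟩
        · rw [Nat.zero_mul]
          simpa using hGk2
        · intro u hu huc
          simp only [Nat.zero_mul, Nat.add_zero] at hu ⊢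
          exact baseC u (by omega) huc
      · -- t = t0 + 2
        rw [show t0 + 1 + 1 - 1 = t0 + 1 by omega]
        have ht0r : t0 + 1 ≤ r' := by omega
        have hmul : t0 * q + q ≤ r' * q := by
          calc t0 * q + q = (t0 + 1) * q := by ring
            _ ≤ r' * q := Nat.mul_le_mul_right q ht0r
        have IH1 := ih (t0 + 1) (by omega) (by omega) (by omega)
        rw [show t0 + 1 - 1 = t0 by omega] at IH1
        set D1 := (t0 + 1) * c with hD1
        set D0 := t0 * c with hD0
        set Q1 := (t0 + 1) * q with hQ1
        set Q0 := t0 * q with hQ0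
        have hD : D1 = D0 + c := by rw [hD1, hD0]; ring
        have hQ : Q1 = Q0 + q := by rw [hQ1, hQ0]; ring
        refine ⟨?_, ?_, ?_⟩
        · -- part (A) : position 1
          have hlow : ∀ v, v ≤ q - 1 → G (D1 + v) = 0 := by
            intro v hv
            rcases t0 with _ | t1
            · rw [show D1 + v = c + v by rw [hD1]; ring_nf]
              exact h0 (c + v) (by omega) (by omega)
            · have hD1' : D1 = t1 * c + 2 * c := by rw [hD1]; ring
              have hmulA : t1 * q + 2 * q ≤ r' * q := by
                calc t1 * q + 2 * q = (t1 + 2) * q := by ring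
                  _ ≤ r' * q := Nat.mul_le_mul_right q (by omega)
              have IH2 := ih (t1 + 1) (by omega) (by omega) (by omega)
              rw [show t1 + 1 - 1 = t1 by omega] at IH2
              rw [show D1 + v = k + t1 * c + (c + v + 1 - q) by omega]
              exact IH2.2.2 (c + v + 1 - q) (by omega) (by omega)
          have keyA := key D1 (by omega)
          rw [show D1 + q = k + D0 + 1 by omega] at keyA
          have zs : ∑ i ∈ Finset.Icc 2 (q - 1), (a i - a (i + 1)) * G (D1 + i) = 0 :=
            Finset.sum_eq_zero fun i hi => by
              rw [Finset.mem_Icc] at hi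
              rw [hlow i (by omega), mul_zero]
          have h00 : G D1 = 0 := by simpa using hlow 0 (by omega)
          rw [zs, IH1.1, hlow 1 (by omega), h00] at keyA
          rw [keyA]; ring
        · -- part (B) : position 2 + Q1
          have keyB := key (D1 + 1 + Q1) (by omega)
          rw [show k + (D1 + 1 + Q1) + 1 = k + D1 + (2 + Q1) by omega] at keyB
          have hB1 : G (D1 + 1 + Q1 + 1) = 0 := by
            rw [show D1 + 1 + Q1 + 1 = k + D0 + (3 + Q0) by omega]
            exact IH1.2.2 _ (by omega) (by omega)
          have hB2 : G (D1 + 1 + Q1) = (-1 : ℤ) ^ (t0 + 1) := by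
            rw [show D1 + 1 + Q1 = k + D0 + (2 + Q0) by omega]
            exact IH1.2.1
          have hB3 : G (D1 + 1 + Q1 + q) = 0 := by
            rw [show D1 + 1 + Q1 + q = k + D0 + (2 + Q0 + q) by omega]
            exact IH1.2.2 _ (by omega) (by omega)
          have hBs : ∑ i ∈ Finset.Icc 2 (q - 1), (a i - a (i + 1)) * G (D1 + 1 + Q1 + i) = 0 :=
            Finset.sum_eq_zero fun i hi => by
              rw [Finset.mem_Icc] at hi
              rw [show D1 + 1 + Q1 + i = k + D0 + (2 + Q0 + i) by omega,
                IH1.2.2 (2 + Q0 + i) (by omega) (by omega), mul_zero]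
          rw [hB1, hB2, hB3, hBs] at keyB
          rw [keyB]; ring
        · -- part (C) : positions beyond 2 + Q1
          intro u hu huc
          obtain ⟨u', rfl⟩ : ∃ u', u = u' + 1 := ⟨u - 1, by omega⟩
          have keyC := key (D1 + u') (by omega)
          rw [show k + (D1 + u') + 1 = k + D1 + (u' + 1) by omega] at keyC
          have hC1 : G (D1 + u' + 1) = 0 := by
            rw [show D1 + u' + 1 = k + D0 + (u' + 2 - q) by omega]
            exact IH1.2.2 _ (by omega) (by omega)
          have hC2 : G (D1 + u') = 0 := by
            rw [show D1 + u' = k + D0 + (u' + 1 - q) by omega]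
            exact IH1.2.2 _ (by omega) (by omega)
          have hC3 : G (D1 + u' + q) = 0 := by
            rw [show D1 + u' + q = k + D0 + (u' + 1) by omega]
            exact IH1.2.2 _ (by omega) (by omega)
          have hCs : ∑ i ∈ Finset.Icc 2 (q - 1), (a i - a (i + 1)) * G (D1 + u' + i) = 0 :=
            Finset.sum_eq_zero fun i hi => by
              rw [Finset.mem_Icc] at hi
              rw [show D1 + u' + i = k + D0 + (u' + 1 + i - q) by omega,
                IH1.2.2 (u' + 1 + i - q) (by omega) (by omega), mul_zero]
          rw [hC1, hC2, hC3, hCs] at keyC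
          rw [keyC]; ring
  intro t ht1 htr
  obtain ⟨hA, hB, hC⟩ := main t ht1 htr
  refine ⟨?_, ?_, ?_⟩
  · rw [hR, hA]
    exact pow_ne_zero _ (by omega)
  · rw [hR, hl, hB]
    exact pow_ne_zero _ (by norm_num)
  · intro u hu huc
    rw [hR]
    exact hC u (by rw [hl] at hu; exact hu) huc
end

section
/- Corollary 5.1: With hypotheses as in the main theorem (q ≥ 2, a_i ≥ 1, a_q ≥ 2, r ≥ 1, k = 1+rq, c = 2+(r-1)q, G defined by the order-k recursion with G_1 = 1, G_i = 0 for 2 ≤ i ≤ k, and R_{t,s} = G_{k+(t-1)c+s}), for all 1 ≤ t ≤ r: R_{t,1} = (-(a_q - 1))^{t-1} and R_{t, 2+(t-1)q} = (-1)^t. -/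
theorem tele_aux (f : ℕ → ℤ) (a : ℕ) : ∀ b, a ≤ b →
    (∑ j ∈ Finset.Icc a b, (f j - f (j - 1))) = f b - f (a - 1) := by
  intro b
  induction b with
  | zero => intro h; simp [Nat.le_zero.mp h]
  | succ b ih =>
    intro h
    rcases Nat.lt_or_ge b a with h' | h'
    · have : a = b + 1 := by omega
      subst this; simp
    · rw [Finset.sum_Icc_succ_top (by omega : a ≤ b + 1), ih h', Nat.add_sub_cancel]
      ring

theorem stmt_10 (q r : ℕ) (hq : 2 ≤ q) (hr : 1 ≤ r) (a : ℕ → ℤ)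
    (ha : ∀ i, 2 ≤ i → i ≤ q → 1 ≤ a i) (haq : 2 ≤ a q)
    (k c : ℕ) (hk : k = 1 + r * q) (hc : c = 2 + (r - 1) * q)
    (G : ℕ → ℤ) (h1 : G 1 = 1) (h0 : ∀ i, 2 ≤ i → i ≤ k → G i = 0)
    (hrec : ∀ n, k < n →
      G n = G (n - k) - (∑ i ∈ Finset.Icc 2 q, a i * G (n - k + i - 1))
            - ∑ j ∈ Finset.Icc q (k-1), G (n - k + j))
    (R : ℕ → ℕ → ℤ) (hR : ∀ t s, R t s = G (k + (t - 1) * c + s)) :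
    ∀ t, 1 ≤ t → t ≤ r →
      R t 1 = (-(a q - 1)) ^ (t - 1) ∧ R t (2 + (t - 1) * q) = (-1) ^ t := by
  have hq1 : q ≤ r * q := Nat.le_mul_of_pos_left q (by omega)
  have hsub : (r - 1) * q = r * q - q := by rw [Nat.sub_mul, one_mul]
  have hck : c + q = k + 1 := by omega
  have hcrq : c + q = 2 + r * q := by omega
  have hc2 : 2 ≤ c := by omega
  have hk3 : 3 ≤ k := by omega
  -- derived short recurrence
  have hstar : ∀ n, k + 2 ≤ n →
      G n = G (n - c) + G (n - k) - G (n - k - 1)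
        - (∑ i ∈ Finset.Icc 2 q, a i * G (n - k + i - 1))
        + (∑ i ∈ Finset.Icc 2 q, a i * G (n - k + i - 2)) := by
    intro n hn
    have h1' := hrec n (by omega)
    have h2' := hrec (n - 1) (by omega)
    have e0 : n - 1 - k = n - k - 1 := by omega
    rw [e0] at h2'
    have e1 : (∑ i ∈ Finset.Icc 2 q, a i * G (n - k - 1 + i - 1))
        = ∑ i ∈ Finset.Icc 2 q, a i * G (n - k + i - 2) := by
      refine Finset.sum_congr rfl ?_
      intro i hi
      rw [Finset.mem_Icc] at hi
      rw [show n - k - 1 + i - 1 = n - k + i - 2 from by omega]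
    rw [e1] at h2'
    have e2 : (∑ j ∈ Finset.Icc q (k - 1), G (n - k - 1 + j))
        = ∑ j ∈ Finset.Icc q (k - 1), G (n - k + (j - 1)) := by
      refine Finset.sum_congr rfl ?_
      intro j hj
      rw [Finset.mem_Icc] at hj
      rw [show n - k - 1 + j = n - k + (j - 1) from by omega]
    rw [e2] at h2'
    have tel : (∑ j ∈ Finset.Icc q (k - 1), G (n - k + j))
        - (∑ j ∈ Finset.Icc q (k - 1), G (n - k + (j - 1)))
        = G (n - 1) - G (n - c) := by
      have t := tele_aux (fun j => G (n - k + j)) q (k - 1) (by omega)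
      rw [Finset.sum_sub_distrib,
        show n - k + (k - 1) = n - 1 from by omega,
        show n - k + (q - 1) = n - c from by omega] at t
      exact t
    linarith [h1', h2', tel]
  -- main induction on block number (0-indexed)
  have main : ∀ u, u + 1 ≤ r →
      G (k + u * c + 1) = (-(a q - 1)) ^ u ∧
      G (k + u * c + (2 + u * q)) = (-1) ^ (u + 1) ∧
      ∀ p, 2 + u * q < p → p ≤ c → G (k + u * c + p) = 0 := by
    intro u
    induction u using Nat.strong_induction_on with
    | _ u IH =>
    intro hur
    rcases u with _ | v
    · -- base block u = 0
      refine ⟨?_, ?_, ?_⟩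
      · -- G (k+1) = 1
        have h := hrec (k + 0 * c + 1) (by omega)
        have t1 : G (k + 0 * c + 1 - k) = 1 := by
          rw [show k + 0 * c + 1 - k = 1 from by omega]; exact h1
        have t4 : (∑ i ∈ Finset.Icc 2 q, a i * G (k + 0 * c + 1 - k + i - 1)) = 0 :=
          Finset.sum_eq_zero (by
            intro i hi; rw [Finset.mem_Icc] at hi
            rw [show k + 0 * c + 1 - k + i - 1 = i from by omega,
              h0 i (by omega) (by omega), mul_zero])
        have t5 : (∑ j ∈ Finset.Icc q (k - 1), G (k + 0 * c + 1 - k + j)) = 0 :=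
          Finset.sum_eq_zero (by
            intro j hj; rw [Finset.mem_Icc] at hj
            exact h0 _ (by omega) (by omega))
        rw [h, t1, t4, t5]; ring
      · -- G (k+2) = -1
        have h := hstar (k + 0 * c + (2 + 0 * q)) (by omega)
        have t1 : G (k + 0 * c + (2 + 0 * q) - c) = 0 := by
          rw [show k + 0 * c + (2 + 0 * q) - c = q + 1 from by omega]
          exact h0 _ (by omega) (by omega)
        have t3 : G (k + 0 * c + (2 + 0 * q) - k - 1) = 1 := by
          rw [show k + 0 * c + (2 + 0 * q) - k - 1 = 1 from by omega]; exact h1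
        have t2 : G (k + 0 * c + (2 + 0 * q) - k) = 0 := by
          rw [show k + 0 * c + (2 + 0 * q) - k = 2 from by omega]
          exact h0 _ (by omega) (by omega)
        have t4 : (∑ i ∈ Finset.Icc 2 q, a i * G (k + 0 * c + (2 + 0 * q) - k + i - 1)) = 0 :=
          Finset.sum_eq_zero (by
            intro i hi; rw [Finset.mem_Icc] at hi
            rw [show k + 0 * c + (2 + 0 * q) - k + i - 1 = i + 1 from by omega,
              h0 (i + 1) (by omega) (by omega), mul_zero])
        have t5 : (∑ i ∈ Finset.Icc 2 q, a i * G (k + 0 * c + (2 + 0 * q) - k + i - 2)) = 0 :=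
          Finset.sum_eq_zero (by
            intro i hi; rw [Finset.mem_Icc] at hi
            rw [show k + 0 * c + (2 + 0 * q) - k + i - 2 = i from by omega,
              h0 i (by omega) (by omega), mul_zero])
        rw [h, t1, t2, t3, t4, t5]; ring
      · -- zeros
        intro p hp2 hpc
        have hp2' : 2 + 0 * q < p := hp2
        have hp3 : 3 ≤ p := by omega
        have h := hstar (k + 0 * c + p) (by omega)
        have t1 : G (k + 0 * c + p - c) = 0 := by
          rw [show k + 0 * c + p - c = p + q - 1 from by omega]
          exact h0 _ (by omega) (by omega)
        have t3 : G (k + 0 * c + p - k - 1) = 0 := by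
          rw [show k + 0 * c + p - k - 1 = p - 1 from by omega]
          exact h0 _ (by omega) (by omega)
        have t2 : G (k + 0 * c + p - k) = 0 := by
          rw [show k + 0 * c + p - k = p from by omega]
          exact h0 _ (by omega) (by omega)
        have t4 : (∑ i ∈ Finset.Icc 2 q, a i * G (k + 0 * c + p - k + i - 1)) = 0 :=
          Finset.sum_eq_zero (by
            intro i hi; rw [Finset.mem_Icc] at hi
            rw [show k + 0 * c + p - k + i - 1 = p + i - 1 from by omega,
              h0 (p + i - 1) (by omega) (by omega), mul_zero])
        have t5 : (∑ i ∈ Finset.Icc 2 q, a i * G (k + 0 * c + p - k + i - 2)) = 0 :=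
          Finset.sum_eq_zero (by
            intro i hi; rw [Finset.mem_Icc] at hi
            rw [show k + 0 * c + p - k + i - 2 = p + i - 2 from by omega,
              h0 (p + i - 2) (by omega) (by omega), mul_zero])
        rw [h, t1, t2, t3, t4, t5]; ring
    · -- step block u = v+1
      have eqc : (v + 1) * c = v * c + c := by ring
      have eqq : (v + 1) * q = v * q + q := by ring
      have hv1 : v + 1 ≤ r := by omega
      have IHv := IH v (by omega) hv1
      have hmul : v * q + 2 * q ≤ r * q := by
        have h' : (v + 2) ≤ r := by omega
        have := Nat.mul_le_mul_right q h'
        have e : (v + 2) * q = v * q + 2 * q := by ring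
        omega
      -- previous-block tail zeros
      have hz : ∀ m, m ≤ q - 1 → G (v * c + c + m) = 0 := by
        intro m hm
        rcases v with _ | w
        · rw [show 0 * c + c + m = c + m from by omega]
          exact h0 _ (by omega) (by omega)
        · have IHw := IH w (by omega) (by omega)
          have eqc' : (w + 1) * c = w * c + c := by ring
          have eqq' : (w + 1) * q = w * q + q := by ring
          rw [show (w + 1) * c + c + m = k + w * c + (c + m + 1 - q) from by omega]
          exact IHw.2.2 _ (by omega) (by omega)
      refine ⟨?_, ?_, ?_⟩
      · -- position 1
        have h := hstar (k + (v + 1) * c + 1) (by omega)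
        have t1 : G (k + (v + 1) * c + 1 - c) = (-(a q - 1)) ^ v := by
          rw [show k + (v + 1) * c + 1 - c = k + v * c + 1 from by omega]
          exact IHv.1
        have t3 : G (k + (v + 1) * c + 1 - k - 1) = 0 := by
          rw [show k + (v + 1) * c + 1 - k - 1 = v * c + c + 0 from by omega]
          exact hz 0 (by omega)
        have t2 : G (k + (v + 1) * c + 1 - k) = 0 := by
          rw [show k + (v + 1) * c + 1 - k = v * c + c + 1 from by omega]
          exact hz 1 (by omega)
        have t4 : (∑ i ∈ Finset.Icc 2 q, a i * G (k + (v + 1) * c + 1 - k + i - 1))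
            = a q * (-(a q - 1)) ^ v := by
          rw [Finset.sum_eq_single_of_mem q (Finset.mem_Icc.mpr ⟨hq, le_refl q⟩)]
          · rw [show k + (v + 1) * c + 1 - k + q - 1 = k + v * c + 1 from by omega, IHv.1]
          · intro i hi hne; rw [Finset.mem_Icc] at hi
            rw [show k + (v + 1) * c + 1 - k + i - 1 = v * c + c + i from by omega,
              hz i (by omega), mul_zero]
        have t5 : (∑ i ∈ Finset.Icc 2 q, a i * G (k + (v + 1) * c + 1 - k + i - 2)) = 0 :=
          Finset.sum_eq_zero (by
            intro i hi; rw [Finset.mem_Icc] at hi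
            rw [show k + (v + 1) * c + 1 - k + i - 2 = v * c + c + (i - 1) from by omega,
              hz (i - 1) (by omega), mul_zero])
        rw [h, t1, t2, t3, t4, t5]; ring
      · -- position 2+(v+1)q
        have h := hstar (k + (v + 1) * c + (2 + (v + 1) * q)) (by omega)
        have t1 : G (k + (v + 1) * c + (2 + (v + 1) * q) - c) = 0 := by
          rw [show k + (v + 1) * c + (2 + (v + 1) * q) - c = k + v * c + (2 + v * q + q)
            from by omega]
          exact IHv.2.2 _ (by omega) (by omega)
        have t3 : G (k + (v + 1) * c + (2 + (v + 1) * q) - k - 1) = (-1) ^ (v + 1) := by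
          rw [show k + (v + 1) * c + (2 + (v + 1) * q) - k - 1 = k + v * c + (2 + v * q)
            from by omega]
          exact IHv.2.1
        have t2 : G (k + (v + 1) * c + (2 + (v + 1) * q) - k) = 0 := by
          rw [show k + (v + 1) * c + (2 + (v + 1) * q) - k = k + v * c + (3 + v * q)
            from by omega]
          exact IHv.2.2 _ (by omega) (by omega)
        have t4 : (∑ i ∈ Finset.Icc 2 q,
            a i * G (k + (v + 1) * c + (2 + (v + 1) * q) - k + i - 1)) = 0 :=
          Finset.sum_eq_zero (by
            intro i hi; rw [Finset.mem_Icc] at hi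
            rw [show k + (v + 1) * c + (2 + (v + 1) * q) - k + i - 1
              = k + v * c + (2 + v * q + i) from by omega,
              IHv.2.2 _ (by omega) (by omega), mul_zero])
        have t5 : (∑ i ∈ Finset.Icc 2 q,
            a i * G (k + (v + 1) * c + (2 + (v + 1) * q) - k + i - 2)) = 0 :=
          Finset.sum_eq_zero (by
            intro i hi; rw [Finset.mem_Icc] at hi
            rw [show k + (v + 1) * c + (2 + (v + 1) * q) - k + i - 2
              = k + v * c + (1 + v * q + i) from by omega,
              IHv.2.2 _ (by omega) (by omega), mul_zero])
        rw [h, t1, t2, t3, t4, t5]; ring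
      · -- zeros
        intro p hp1 hpc
        have hp1' : 2 + (v * q + q) < p := by omega
        have h := hstar (k + (v + 1) * c + p) (by omega)
        have t1 : G (k + (v + 1) * c + p - c) = 0 := by
          rw [show k + (v + 1) * c + p - c = k + v * c + p from by omega]
          exact IHv.2.2 _ (by omega) (by omega)
        have t3 : G (k + (v + 1) * c + p - k - 1) = 0 := by
          rw [show k + (v + 1) * c + p - k - 1 = k + v * c + (p - q) from by omega]
          exact IHv.2.2 _ (by omega) (by omega)
        have t2 : G (k + (v + 1) * c + p - k) = 0 := by
          rw [show k + (v + 1) * c + p - k = k + v * c + (p + 1 - q) from by omega]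
          exact IHv.2.2 _ (by omega) (by omega)
        have t4 : (∑ i ∈ Finset.Icc 2 q, a i * G (k + (v + 1) * c + p - k + i - 1)) = 0 :=
          Finset.sum_eq_zero (by
            intro i hi; rw [Finset.mem_Icc] at hi
            rw [show k + (v + 1) * c + p - k + i - 1 = k + v * c + (p + i - q) from by omega,
              IHv.2.2 _ (by omega) (by omega), mul_zero])
        have t5 : (∑ i ∈ Finset.Icc 2 q, a i * G (k + (v + 1) * c + p - k + i - 2)) = 0 :=
          Finset.sum_eq_zero (by
            intro i hi; rw [Finset.mem_Icc] at hi
            rw [show k + (v + 1) * c + p - k + i - 2 = k + v * c + (p + i - 1 - q)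
              from by omega,
              IHv.2.2 _ (by omega) (by omega), mul_zero])
        rw [h, t1, t2, t3, t4, t5]; ring
  -- conclude
  intro t ht1 ht2
  have hm := main (t - 1) (by omega)
  rw [hR, hR]
  refine ⟨hm.1, ?_⟩
  conv_rhs => rw [show t = t - 1 + 1 from by omega]
  exact hm.2.1
end

section
/- Main theorem part (ii), boundary-free form: under the hypotheses of the main theorem (q ≥ 2, a_i ≥ 1, a_q ≥ 2, r ≥ 2, k = 1+rq, c = 2+(r-1)q), for all n with k + c + 1 ≤ n ≤ k + rc, the sequence G satisfies G_n = -(a_q - 1) G_{n-c} + ∑_{e=2}^{q-1} (a_{e+1} - a_e) G_{n-c-q+e} + (1 + a_2) G_{n-c-q+1} - G_{n-c-q}. -/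
private lemma shift_sum (h : ℕ → ℤ) (N : ℕ) :
    ∑ x ∈ Finset.range N, h (x + 1) = ∑ x ∈ Finset.range N, h x + h N - h 0 := by
  have h1 := Finset.sum_range_succ' h N
  have h2 := Finset.sum_range_succ h N
  linarith

theorem stmt_16 (q r : ℕ) (hq : 2 ≤ q) (hr : 2 ≤ r) (a : ℕ → ℤ)
    (ha : ∀ i, 2 ≤ i → i ≤ q → 1 ≤ a i) (haq : 2 ≤ a q)
    (k c : ℕ) (hk : k = 1 + r * q) (hc : c = 2 + (r - 1) * q)
    (G : ℕ → ℤ) (h1 : G 1 = 1) (h0 : ∀ i, 2 ≤ i → i ≤ k → G i = 0)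
    (hrec : ∀ n, k < n →
      G n = G (n - k) - (∑ i ∈ Finset.Icc 2 q, a i * G (n - k + i - 1))
            - ∑ j ∈ Finset.Icc q (k-1), G (n - k + j)) :
    ∀ n, k + c + 1 ≤ n → n ≤ k + r * c →
      G n = -(a q - 1) * G (n - c)
            + (∑ e ∈ Finset.Icc 2 (q-1), (a (e+1) - a e) * G (n - c - q + e))
            + (1 + a 2) * G (n - c - q + 1) - G (n - c - q) := by
  intro n hn1 hn2
  have hqk : q + 1 ≤ k := by
    subst hk
    have : q ≤ r * q := Nat.le_mul_of_pos_left q (by omega)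
    omega
  have hck : c + q = k + 1 := by
    subst hk hc
    obtain ⟨r', rfl⟩ : ∃ r', r = r' + 1 := ⟨r - 1, by omega⟩
    simp only [Nat.add_sub_cancel]
    ring
  have hc2 : 2 ≤ c := by rw [hc]; exact Nat.le_add_right 2 _
  set m := n - k - 1 with hm
  -- recurrence at n
  have hA := hrec n (by omega)
  simp only [show n - k = m + 1 from by omega] at hA
  simp only [show ∀ i : ℕ, m + 1 + i - 1 = m + i from fun i => by omega] at hA
  -- recurrence at n - 1
  have hB := hrec (n - 1) (by omega)
  rw [show n - 1 = m + k from by omega] at hB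
  simp only [Nat.add_sub_cancel] at hB
  -- rewrite the goal
  simp only [show n - c = m + q from by omega, Nat.add_sub_cancel]
  -- convert all Icc sums to range sums
  simp only [← Finset.Ico_add_one_right_eq_Icc, Finset.sum_Ico_eq_sum_range] at hA hB ⊢
  simp only [show q + 1 - 2 = q - 1 from by omega, show k - 1 + 1 - q = k - q from by omega,
    show q - 1 + 1 - 2 = q - 2 from by omega] at hA hB ⊢
  -- R1 : shifting the long sum
  have R1 : (∑ x ∈ Finset.range (k - q), G (m + 1 + (q + x)))
      = (∑ x ∈ Finset.range (k - q), G (m + (q + x))) + G (m + k) - G (m + q) := by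
    have h := shift_sum (fun x => G (m + (q + x))) (k - q)
    rw [show m + (q + (k - q)) = m + k from by omega, show m + (q + 0) = m + q from by omega] at h
    rw [← h]
    apply Finset.sum_congr rfl
    intro x _
    congr 1
    omega
  -- R2a : top term of sum A
  have R2a : (∑ x ∈ Finset.range (q - 1), a (2 + x) * G (m + (2 + x)))
      = (∑ x ∈ Finset.range (q - 2), a (2 + x) * G (m + (2 + x))) + a q * G (m + q) := by
    have h := Finset.sum_range_succ (fun x => a (2 + x) * G (m + (2 + x))) (q - 2)
    rw [show q - 2 + 1 = q - 1 from by omega, show 2 + (q - 2) = q from by omega,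
      show m + q = m + q from rfl] at h
    exact h
  -- R2b : bottom term of sum B
  have R2b : (∑ x ∈ Finset.range (q - 2), a (2 + x + 1) * G (m + (2 + x)))
      = (∑ x ∈ Finset.range (q - 1), a (2 + x) * G (m + (2 + x) - 1)) - a 2 * G (m + 1) := by
    have h := Finset.sum_range_succ' (fun x => a (2 + x) * G (m + (2 + x) - 1)) (q - 2)
    rw [show q - 2 + 1 = q - 1 from by omega, show m + (2 + 0) - 1 = m + 1 from by omega,
      show (2:ℕ) + 0 = 2 from rfl] at h
    rw [h]
    have : ∀ x ∈ Finset.range (q - 2),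
        a (2 + x + 1) * G (m + (2 + x)) = a (2 + (x + 1)) * G (m + (2 + (x + 1)) - 1) := by
      intro x _
      have e1 : 2 + x + 1 = 2 + (x + 1) := by omega
      have e2 : m + (2 + x) = m + (2 + (x + 1)) - 1 := by omega
      rw [e1, e2]
    rw [Finset.sum_congr rfl this]
    ring
  -- expand the goal sum
  have R2c : (∑ x ∈ Finset.range (q - 2), (a (2 + x + 1) - a (2 + x)) * G (m + (2 + x)))
      = (∑ x ∈ Finset.range (q - 2), a (2 + x + 1) * G (m + (2 + x)))
        - ∑ x ∈ Finset.range (q - 2), a (2 + x) * G (m + (2 + x)) := by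
    rw [← Finset.sum_sub_distrib]
    apply Finset.sum_congr rfl
    intro x _
    ring
  rw [R2c]
  linarith [hA, hB, R1, R2a, R2b]
end

section
/- Corollary 5.2: Under the hypotheses of the main theorem, the sequence l(1), l(2), …, l(r) of positions of the last nonzero element of each row of the embedded rectangle is the arithmetic progression l(t) = 2 + (t-1)q, with l(1) = 2 and l(r) = c = 2 + (r-1)q; in particular it is strictly increasing. -/
theorem stmt_17 (q r : ℕ) (hq : 2 ≤ q) (hr : 1 ≤ r) (a : ℕ → ℤ)
    (ha : ∀ i, 2 ≤ i → i ≤ q → 1 ≤ a i) (haq : 2 ≤ a q)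
    (k c : ℕ) (hk : k = 1 + r * q) (hc : c = 2 + (r - 1) * q)
    (G : ℕ → ℤ) (h1 : G 1 = 1) (h0 : ∀ i, 2 ≤ i → i ≤ k → G i = 0)
    (hrec : ∀ n, k < n →
      G n = G (n - k) - (∑ i ∈ Finset.Icc 2 q, a i * G (n - k + i - 1))
            - ∑ j ∈ Finset.Icc q (k-1), G (n - k + j))
    (R : ℕ → ℕ → ℤ) (hR : ∀ t s, R t s = G (k + (t - 1) * c + s))
    (l : ℕ → ℕ) (hl : ∀ t, l t = 2 + (t - 1) * q) :
    (∀ t, 1 ≤ t → t ≤ r →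
      R t (l t) ≠ 0 ∧ ∀ u, l t < u → u ≤ c → R t u = 0) ∧
    l 1 = 2 ∧ l r = c ∧
    (∀ t, 1 ≤ t → t < r → l t < l (t + 1)) := by
  have h1q : r - 1 + 1 = r := Nat.succ_pred_eq_of_pos hr
  have hmul : (r - 1) * q + q = r * q := by
    conv_rhs => rw [← h1q, Nat.succ_mul]
  have hkc : c + q = k + 1 := by omega
  have hc2 : 2 ≤ c := by rw [hc]; omega
  have hkq : q + 1 ≤ k := by omega
  -- The key "differenced" recurrence with a short window
  have lemA : ∀ m : ℕ, 1 ≤ m → G (k + m + 1) =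
      G (m + 1) - G m + G (m + q)
        - ∑ i ∈ Finset.Icc 2 q, a i * (G (m + i) - G (m + i - 1)) := by
    intro m hm
    have h1' := hrec (k + m + 1) (by omega)
    have h2' := hrec (k + m) (by omega)
    rw [show k + m + 1 - k = m + 1 from by omega] at h1'
    rw [show k + m - k = m from by omega] at h2'
    have hS1 : (∑ i ∈ Finset.Icc 2 q, a i * G (m + 1 + i - 1))
        = ∑ i ∈ Finset.Icc 2 q, a i * G (m + i) :=
      Finset.sum_congr rfl fun i _ => by rw [show m + 1 + i - 1 = m + i from by omega]
    rw [hS1] at h1'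
    -- reindex the long sum
    have reidx : (∑ j ∈ Finset.Icc q (k - 1), G (m + 1 + j))
        = ∑ j ∈ Finset.Icc (q + 1) k, G (m + j) := by
      have hmap : Finset.Icc (q + 1) k
          = Finset.map (addLeftEmbedding 1) (Finset.Icc q (k - 1)) := by
        rw [Finset.map_add_left_Icc]
        congr 1 <;> omega
      rw [hmap, Finset.sum_map]
      refine Finset.sum_congr rfl fun j _ => ?_
      have : m + 1 + j = m + (addLeftEmbedding 1) j := by
        simp only [addLeftEmbedding_apply]; omega
      rw [this]
    have split_bot : (∑ j ∈ Finset.Icc q k, G (m + j))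
        = G (m + q) + ∑ j ∈ Finset.Icc (q + 1) k, G (m + j) := by
      rw [Finset.Icc_eq_cons_Ioc (show q ≤ k by omega), Finset.sum_cons, Finset.Icc_add_one_left_eq_Ioc]
    have hk1 : k - 1 + 1 = k := by omega
    have split_top : (∑ j ∈ Finset.Icc q k, G (m + j))
        = (∑ j ∈ Finset.Icc q (k - 1), G (m + j)) + G (m + (k - 1 + 1)) := by
      calc (∑ j ∈ Finset.Icc q k, G (m + j))
          = ∑ j ∈ Finset.Icc q (k - 1 + 1), G (m + j) := by rw [hk1]
        _ = (∑ j ∈ Finset.Icc q (k - 1), G (m + j)) + G (m + (k - 1 + 1)) :=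
            Finset.sum_Icc_succ_top (by omega) _
    rw [hk1] at split_top
    have hGmk : G (m + k) = G (k + m) := by rw [add_comm]
    rw [hGmk] at split_top
    have hsum : (∑ i ∈ Finset.Icc 2 q, a i * (G (m + i) - G (m + i - 1)))
        = (∑ i ∈ Finset.Icc 2 q, a i * G (m + i))
          - ∑ i ∈ Finset.Icc 2 q, a i * G (m + i - 1) := by
      rw [← Finset.sum_sub_distrib]
      exact Finset.sum_congr rfl fun i _ => mul_sub _ _ _
    rw [reidx] at h1'
    linarith [h1', h2', split_bot, split_top, hsum]
  -- Main induction: row p+1 of the rectangle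
  have key : ∀ p, p < r → G (k + p * c + (2 + p * q)) = (-1 : ℤ) ^ (p + 1) ∧
      ∀ u, 2 + p * q < u → u ≤ c → G (k + p * c + u) = 0 := by
    intro p
    induction p with
    | zero =>
      intro _
      simp only [Nat.zero_mul, Nat.add_zero]
      constructor
      · -- G (k + 2) = -1
        have h := lemA 1 le_rfl
        rw [h0 (1 + 1) (by omega) (by omega), h1,
          h0 (1 + q) (by omega) (by omega)] at h
        have hz : (∑ i ∈ Finset.Icc 2 q, a i * (G (1 + i) - G (1 + i - 1))) = 0 := by
          refine Finset.sum_eq_zero fun i hi => ?_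
          simp only [Finset.mem_Icc] at hi
          rw [h0 (1 + i - 1) (by omega) (by omega), h0 (1 + i) (by omega) (by omega)]
          ring
        rw [hz] at h
        rw [show k + 2 = k + 1 + 1 from by omega, h]
        norm_num
      · intro u hu huc
        have hm1 : 1 ≤ u - 1 := by omega
        have h := lemA (u - 1) hm1
        rw [show u - 1 + 1 = u from by omega] at h
        rw [h0 u (by omega) (by omega), h0 (u - 1) (by omega) (by omega),
          h0 (u - 1 + q) (by omega) (by omega)] at h
        have hz : (∑ i ∈ Finset.Icc 2 q, a i * (G (u - 1 + i) - G (u - 1 + i - 1))) = 0 := by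
          refine Finset.sum_eq_zero fun i hi => ?_
          simp only [Finset.mem_Icc] at hi
          rw [h0 (u - 1 + i - 1) (by omega) (by omega),
            h0 (u - 1 + i) (by omega) (by omega)]
          ring
        rw [hz] at h
        rw [show k + u = k + (u - 1) + 1 from by omega, h]
        ring
    | succ p ih =>
      intro hp
      obtain ⟨ihL, ihZ⟩ := ih (by omega)
      have hAc : (p + 1) * c = p * c + c := by ring
      have hAq : (p + 1) * q = p * q + q := by ring
      have hle : 2 + (p + 1) * q ≤ c := by
        rw [hAq, hc]
        have h2 : p + 1 ≤ r - 1 := by omega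
        have := Nat.mul_le_mul_right q h2
        rw [Nat.succ_mul] at this
        omega
      rw [hAq] at hle
      constructor
      · -- leading entry of row p+2
        have h := lemA (k + p * c + (2 + p * q)) (by omega)
        rw [show k + p * c + (2 + p * q) + 1 = k + p * c + (2 + p * q + 1) from by omega,
          show k + p * c + (2 + p * q) + q = k + p * c + (2 + p * q + q) from by omega] at h
        rw [ihZ (2 + p * q + 1) (by omega) (by omega),
          ihZ (2 + p * q + q) (by omega) (by omega), ihL] at h
        have hz : (∑ i ∈ Finset.Icc 2 q,
            a i * (G (k + p * c + (2 + p * q) + i) - G (k + p * c + (2 + p * q) + i - 1))) = 0 := by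
          refine Finset.sum_eq_zero fun i hi => ?_
          simp only [Finset.mem_Icc] at hi
          rw [show k + p * c + (2 + p * q) + i - 1 = k + p * c + (2 + p * q + (i - 1))
              from by omega,
            ihZ (2 + p * q + (i - 1)) (by omega) (by omega),
            show k + p * c + (2 + p * q) + i = k + p * c + (2 + p * q + i) from by omega,
            ihZ (2 + p * q + i) (by omega) (by omega)]
          ring
        rw [hz] at h
        rw [hAc, hAq,
          show k + (p * c + c) + (2 + (p * q + q)) = k + (k + p * c + (2 + p * q)) + 1
            from by omega, h, pow_succ]
        ring
      · -- zero tail of row p+2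
        intro u hu huc
        rw [hAq] at hu
        have h := lemA (k + p * c + (u - q)) (by omega)
        rw [show k + p * c + (u - q) + 1 = k + p * c + (u - q + 1) from by omega,
          show k + p * c + (u - q) + q = k + p * c + u from by omega] at h
        rw [ihZ (u - q + 1) (by omega) (by omega),
          ihZ (u - q) (by omega) (by omega),
          ihZ u (by omega) (by omega)] at h
        have hz : (∑ i ∈ Finset.Icc 2 q,
            a i * (G (k + p * c + (u - q) + i) - G (k + p * c + (u - q) + i - 1))) = 0 := by
          refine Finset.sum_eq_zero fun i hi => ?_
          simp only [Finset.mem_Icc] at hi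
          rw [show k + p * c + (u - q) + i - 1 = k + p * c + (u - q + i - 1) from by omega,
            ihZ (u - q + i - 1) (by omega) (by omega),
            show k + p * c + (u - q) + i = k + p * c + (u - q + i) from by omega,
            ihZ (u - q + i) (by omega) (by omega)]
          ring
        rw [hz] at h
        rw [hAc, show k + (p * c + c) + u = k + (k + p * c + (u - q)) + 1 from by omega, h]
        ring
  refine ⟨?_, ?_, ?_, ?_⟩
  · intro t ht1 htr
    obtain ⟨hL, hZ⟩ := key (t - 1) (by omega)
    constructor
    · rw [hR, hl, hL]
      exact pow_ne_zero _ (by norm_num)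
    · intro u h1u h2u
      rw [hl] at h1u
      rw [hR]
      exact hZ u h1u h2u
  · rw [hl]; simp
  · rw [hl, hc]
  · intro t ht1 htr
    rw [hl, hl]
    have := Nat.mul_lt_mul_of_lt_of_le (show t - 1 < t + 1 - 1 by omega) (le_refl q) (by omega)
    omega
end
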